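/- arXiv:1511.00209 — 2 statements merged into one kernel-verified Lean document; each statement's English description precedes it below -/
import Mathlib

section
/- Let p and q be relatively prime positive integers. Then the subshift generated by the type-S skew Sturmian sequence S(0,q/p) of frequency q/p is conjugate to the subshift generated by the type-S′ skew Sturmian sequence S′(0,p/q) of frequency p/q. -/
open Classical

/-- The shift map `σ` on bi-infinite sequences: `σ(x)_i = x_{i+1}`. -/
def shiftMap {A : Type*} (x : ℤ → A) : ℤ → A := fun i => x (i + 1)

/-- The iterated shift `σ^k` for `k ∈ ℤ`: `σ^k(x)_i = x_{i+k}`. -/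
def shiftZ {A : Type*} (k : ℤ) (x : ℤ → A) : ℤ → A := fun i => x (i + k)

/-- `x` is periodic with period `N > 0`, i.e. `σ^N(x) = x`. -/
def IsPeriodicWith {A : Type*} (x : ℤ → A) (N : ℕ) : Prop :=
  0 < N ∧ ∀ i : ℤ, x (i + N) = x i

/-- `x` is periodic (with some period `N > 0`). -/
def IsPeriodicSeq {A : Type*} (x : ℤ → A) : Prop := ∃ N : ℕ, IsPeriodicWith x N

/-- The sequence `p(x;i,n)` obtained from `x` by removing the block `x_{i+1} ⋯ x_{i+n}`. -/
def removeBlock {A : Type*} (x : ℤ → A) (i : ℤ) (n : ℕ) : ℤ → A :=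
  fun k => if k ≤ i then x k else x (k + n)

/-- `(i,n)` is an anomaly occurrence of `x`: `n > 0` and `p(x;i,n)` is periodic. -/
def IsAnomalyOcc {A : Type*} (x : ℤ → A) (i : ℤ) (n : ℕ) : Prop :=
  0 < n ∧ IsPeriodicSeq (removeBlock x i n)

/-- `x` is eventually periodic: non-periodic, but removing some block leaves a periodic sequence. -/
def EventuallyPeriodic {A : Type*} (x : ℤ → A) : Prop :=
  ¬ IsPeriodicSeq x ∧ ∃ (i : ℤ) (n : ℕ), IsAnomalyOcc x i n

/-- The least period of an eventually periodic sequence `x`: the least period of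
`p(x;i,n)` over anomaly occurrences `(i,n)` of `x`. -/
noncomputable def evLeastPeriod {A : Type*} (x : ℤ → A) : ℕ :=
  sInf {N : ℕ | ∃ (i : ℤ) (n : ℕ), IsAnomalyOcc x i n ∧ IsPeriodicWith (removeBlock x i n) N}

/-- The anomaly size `a(x)`: the minimum of `n` over anomaly occurrences `(i,n)` of `x`. -/
noncomputable def anomalySize {A : Type*} (x : ℤ → A) : ℕ :=
  sInf {n : ℕ | ∃ i : ℤ, IsAnomalyOcc x i n}

/-- The orbit `{σ^k(x) : k ∈ ℤ}` of a bi-infinite sequence. -/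
def seqOrbit {A : Type*} (x : ℤ → A) : Set (ℤ → A) := {y | ∃ k : ℤ, y = shiftZ k x}

/-- The subshift generated by `x`: the closure of its orbit in the product topology. -/
def subshiftGen {A : Type*} [TopologicalSpace A] (x : ℤ → A) : Set (ℤ → A) :=
  closure (seqOrbit x)

/-- Two subshifts are conjugate if there is a homeomorphism between them commuting
with the shift. -/
def Conjugate {A B : Type*} [TopologicalSpace A] [TopologicalSpace B]
    (X : Set (ℤ → A)) (Y : Set (ℤ → B)) : Prop :=
  ∃ φ : X ≃ₜ Y, ∀ (u : ℤ → A) (hu : u ∈ X) (hu' : shiftMap u ∈ X),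
    ((φ ⟨shiftMap u, hu'⟩ : Y) : ℤ → B) = shiftMap ((φ ⟨u, hu⟩ : Y) : ℤ → B)

/-- The relation generating the suspension: `(x,s) ∼ (σ^n(x), s - n)`. -/
def SuspRel {A : Type*} (X : Set (ℤ → A)) : (X × ℝ) → (X × ℝ) → Prop :=
  fun p q => ∃ n : ℤ, (q.1 : ℤ → A) = shiftZ n (p.1 : ℤ → A) ∧ q.2 = p.2 - n

/-- The suspension `ΣX` of a subshift `X`. -/
def Susp {A : Type*} [TopologicalSpace A] (X : Set (ℤ → A)) : Type _ :=
  Quot (SuspRel X)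

instance {A : Type*} [TopologicalSpace A] (X : Set (ℤ → A)) : TopologicalSpace (Susp X) :=
  instTopologicalSpaceQuot

/-- The suspension flow `φ_t [x,s] = [x, s+t]`. -/
def suspFlow {A : Type*} [TopologicalSpace A] (X : Set (ℤ → A)) (t : ℝ) :
    Susp X → Susp X :=
  Quot.lift (fun p => Quot.mk _ (p.1, p.2 + t)) (by
    rintro p r ⟨n, h1, h2⟩
    exact Quot.sound ⟨n, h1, by rw [h2]; ring⟩)

/-- Two subshifts are flow equivalent if there is a homeomorphism of their suspensions
taking flow lines to flow lines in an orientation-preserving way. -/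
def FlowEquiv {A B : Type*} [TopologicalSpace A] [TopologicalSpace B]
    (X : Set (ℤ → A)) (Y : Set (ℤ → B)) : Prop :=
  ∃ h : Susp X ≃ₜ Susp Y, ∀ u : Susp X, ∃ τ : ℝ → ℝ,
    StrictMono τ ∧ Function.Bijective τ ∧ τ 0 = 0 ∧
      ∀ t : ℝ, h (suspFlow X t u) = suspFlow Y (τ t) (h u)

/-- Cell lengths `z_n` for the type-`S` skew Sturmian sequence `S(0, q/p)`, with `β = p/q`. -/
noncomputable def cellLenS (p q : ℤ) (n : ℤ) : ℕ :=
  if n < 0 then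
    ({k : ℤ | (n : ℚ) < (k : ℚ) * ((p : ℚ) / (q : ℚ)) ∧
        (k : ℚ) * ((p : ℚ) / (q : ℚ)) ≤ (n : ℚ) + 1}).ncard
  else if n = 0 then
    ({k : ℤ | 0 < (k : ℚ) * ((p : ℚ) / (q : ℚ)) ∧
        (k : ℚ) * ((p : ℚ) / (q : ℚ)) < 1}).ncard
  else
    ({k : ℤ | (n : ℚ) ≤ (k : ℚ) * ((p : ℚ) / (q : ℚ)) ∧
        (k : ℚ) * ((p : ℚ) / (q : ℚ)) < (n : ℚ) + 1}).ncard

/-- Cell lengths `z′_n` for the type-`S′` skew Sturmian sequence `S′(0, q/p)`, with `β = p/q`. -/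
noncomputable def cellLenS' (p q : ℤ) (n : ℤ) : ℕ :=
  if n < 0 then
    ({k : ℤ | (n : ℚ) ≤ (k : ℚ) * ((p : ℚ) / (q : ℚ)) ∧
        (k : ℚ) * ((p : ℚ) / (q : ℚ)) < (n : ℚ) + 1}).ncard
  else if n = 0 then
    ({k : ℤ | 0 ≤ (k : ℚ) * ((p : ℚ) / (q : ℚ)) ∧
        (k : ℚ) * ((p : ℚ) / (q : ℚ)) ≤ 1}).ncard
  else
    ({k : ℤ | (n : ℚ) < (k : ℚ) * ((p : ℚ) / (q : ℚ)) ∧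
        (k : ℚ) * ((p : ℚ) / (q : ℚ)) ≤ (n : ℚ) + 1}).ncard

/-- The position `L_n` of the leading `1` of the cell `B_n`. -/
noncomputable def cellStart (z : ℤ → ℕ) (n : ℤ) : ℤ :=
  if 0 ≤ n then n + ∑ j ∈ Finset.Ico (0 : ℤ) n, (z j : ℤ)
  else n - ∑ j ∈ Finset.Ico n (0 : ℤ), (z j : ℤ)

/-- The `{0,1}`-sequence determined by cell lengths `z`: a `1` at each position `L_n`
and `0` elsewhere. -/
noncomputable def seqOfCells (z : ℤ → ℕ) : ℤ → Fin 2 :=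
  fun i => if ∃ n : ℤ, i = cellStart z n then 1 else 0

/-- The type-`S` skew Sturmian sequence `S(0, q/p)`. -/
noncomputable def sturmS (p q : ℤ) : ℤ → Fin 2 := seqOfCells (cellLenS p q)

/-- The type-`S′` skew Sturmian sequence `S′(0, q/p)`. -/
noncomputable def sturmS' (p q : ℤ) : ℤ → Fin 2 := seqOfCells (cellLenS' p q)

/-!
Scaled by `q`, resp. `p`, both sequences code the merged increasing list of the multiples of
`p` and of `q`, with the symbols `0` and `1` exchanged between the two types. Concretely, with
`N = p + q`, position `j` of `S(0,q/p)` carries a `1` iff a multiple of `N` lies in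
`(jp, (j+1)p]`, and position `j + 1` of `S′(0,p/q)` carries a `1` iff one lies in `[jq, (j+1)q)`,
that is (reflecting at `(j+1)N`) in `((j+1)p, jp + N]` (for `j ≤ 0` the intervals are closed
at the other end). Since `(jp, jp + N]` contains exactly one multiple of `N`, `S′(0,p/q)` is
`S(0,q/p)` shifted by one place with `0` and `1` exchanged, and the coordinatewise flip
conjugates the two subshifts.
-/

namespace Int

variable {N : ℤ}

theorem exists_mul_mem_Ioc_iff (hN : 0 < N) (a b : ℤ) :
    (∃ n, n * N ∈ Set.Ioc a b) ↔ a / N < b / N := by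
  constructor
  · rintro ⟨n, han, hnb⟩
    exact ((Int.ediv_lt_iff_lt_mul hN).2 han).trans_le ((Int.le_ediv_iff_mul_le hN).2 hnb)
  · intro h
    exact ⟨b / N, (Int.ediv_lt_iff_lt_mul hN).1 h, (Int.le_ediv_iff_mul_le hN).1 le_rfl⟩

theorem exists_mul_mem_Ioc_iff_not_exists (hN : 0 < N) (a b : ℤ) :
    (∃ n, n * N ∈ Set.Ioc a b) ↔ ¬∃ n, n * N ∈ Set.Ioc b (a + N) := by
  have hshift : (a + N) / N = a / N + 1 := by simpa using add_mul_ediv_right a 1 hN.ne'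
  rw [exists_mul_mem_Ioc_iff hN, exists_mul_mem_Ioc_iff hN, hshift]
  omega

theorem exists_mul_mem_Ioc_iff_exists_mul_mem_Ico (m a b : ℤ) :
    (∃ n, n * N ∈ Set.Ioc a b) ↔ ∃ n, n * N ∈ Set.Ico (m * N - b) (m * N - a) := by
  constructor <;> rintro ⟨n, h1, h2⟩ <;>
    exact ⟨m - n, by rw [sub_mul]; linarith, by rw [sub_mul]; linarith⟩

end Int

theorem cellStart_succ (z : ℤ → ℕ) (n : ℤ) : cellStart z (n + 1) = cellStart z n + 1 + z n := by
  rcases lt_trichotomy n (-1) with hn | rfl | hn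
  · rw [cellStart, cellStart, if_neg (by omega), if_neg (by omega),
      ← Finset.insert_Ico_add_one_left_eq_Ico (by omega : n < 0),
      Finset.sum_insert (by simp)]
    ring
  · rw [cellStart, cellStart, if_pos (by omega), if_neg (by omega),
      ← Finset.insert_Ico_add_one_left_eq_Ico (by omega : (-1 : ℤ) < 0)]
    simp only [Int.reduceNeg, neg_add_cancel, Finset.Ico_self, Finset.sum_empty, add_zero,
      insert_empty_eq, Finset.sum_singleton]
    ring
  · rw [cellStart, cellStart, if_pos (by omega), if_pos (by omega),
      ← Finset.insert_Ico_right_eq_Ico_add_one (by omega : 0 ≤ n),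
      Finset.sum_insert (by simp)]
    ring

theorem cellStart_eq_add_of_telescope {z : ℤ → ℕ} {F : ℤ → ℤ} (hF : F 0 = 0)
    (hz : ∀ n, (z n : ℤ) = F (n + 1) - F n) (n : ℤ) : cellStart z n = n + F n := by
  induction n using Int.induction_on with
  | zero => simp [cellStart, hF]
  | succ i ih => rw [cellStart_succ, ih, hz]; ring
  | pred i ih =>
    have h := cellStart_succ z (-i - 1)
    rw [sub_add_cancel, ih, hz, sub_add_cancel] at h
    linarith

theorem ncard_eq_ediv_sub_ediv {s : Set ℤ} {p a b : ℤ} (hp : 0 < p) (hab : a ≤ b)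
    (hs : ∀ k, k ∈ s ↔ a < k * p ∧ k * p ≤ b) : (s.ncard : ℤ) = b / p - a / p := by
  have hset : s = ↑(Finset.Ioc (a / p) (b / p)) := by
    ext k
    simp [hs, Int.ediv_lt_iff_lt_mul hp, Int.le_ediv_iff_mul_le hp]
  rw [hset, Set.ncard_coe_finset, Int.card_Ioc_of_le _ _ (Int.ediv_le_ediv hp hab)]

section SkewSturmian

variable {p q : ℤ}

/- With `β = p / q`, `cellCountS p q n` is the number of `k` with `0 < kβ < n` if `n > 0`, and
minus the number of `k` with `n < kβ ≤ 0` if `n ≤ 0`; `cellCountS'` is the analogue for the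
intervals `[0, n]` and `[n, 0)`. Hence `L_n = n + cellCountS p q n`, resp. `n + cellCountS' p q n`. -/
def cellCountS (p q n : ℤ) : ℤ := if 0 < n then (n * q - 1) / p else n * q / p

def cellCountS' (p q n : ℤ) : ℤ := if 0 < n then n * q / p + 1 else (n * q - 1) / p + 1

theorem cellLenS_eq_sub (hp : 0 < p) (hq : 0 < q) (n : ℤ) :
    (cellLenS p q n : ℤ) = cellCountS p q (n + 1) - cellCountS p q n := by
  have hq' : (0 : ℚ) < q := by exact_mod_cast hq
  simp only [cellLenS, cellCountS, ← mul_div_assoc, lt_div_iff₀ hq', div_lt_iff₀ hq',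
    le_div_iff₀ hq', div_le_iff₀ hq']
  norm_cast
  rcases lt_trichotomy n 0 with hn | rfl | hn
  · rw [if_pos hn, if_neg (by omega), if_neg (by omega)]
    exact ncard_eq_ediv_sub_ediv hp (by nlinarith) fun _ ↦ Iff.rfl
  · simp only [lt_irrefl, if_false, zero_add, one_mul, if_true, zero_lt_one, zero_mul]
    exact ncard_eq_ediv_sub_ediv hp (by omega) fun k ↦ by simp only [Set.mem_ofPred_eq]; omega
  · rw [if_neg (by omega), if_neg (by omega), if_pos hn, if_pos (by omega)]
    exact ncard_eq_ediv_sub_ediv hp (by nlinarith) fun k ↦ by simp only [Set.mem_ofPred_eq]; omega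

theorem cellLenS'_eq_sub (hp : 0 < p) (hq : 0 < q) (n : ℤ) :
    (cellLenS' p q n : ℤ) = cellCountS' p q (n + 1) - cellCountS' p q n := by
  have hq' : (0 : ℚ) < q := by exact_mod_cast hq
  simp only [cellLenS', cellCountS', ← mul_div_assoc, lt_div_iff₀ hq', div_lt_iff₀ hq',
    le_div_iff₀ hq', div_le_iff₀ hq']
  norm_cast
  rcases lt_trichotomy n 0 with hn | rfl | hn
  · rw [if_pos hn, if_neg (by omega), if_neg (by omega),
      ncard_eq_ediv_sub_ediv (a := n * q - 1) (b := (n + 1) * q - 1) hp (by nlinarith)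
        fun k ↦ by simp only [Set.mem_ofPred_eq]; omega]
    ring
  · simp only [lt_irrefl, if_false, zero_add, one_mul, if_true, zero_lt_one, zero_mul, zero_sub]
    rw [ncard_eq_ediv_sub_ediv (a := -1) (b := q) hp (by omega)
      fun k ↦ by simp only [Set.mem_ofPred_eq]; omega]
    ring
  · rw [if_neg (by omega), if_neg (by omega), if_pos hn, if_pos (by omega),
      ncard_eq_ediv_sub_ediv (a := n * q) (b := (n + 1) * q) hp (by nlinarith) fun _ ↦ by rfl]
    ring

theorem cellStart_cellLenS (hp : 0 < p) (hq : 0 < q) (n : ℤ) :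
    cellStart (cellLenS p q) n = n + cellCountS p q n :=
  cellStart_eq_add_of_telescope (by simp [cellCountS]) (cellLenS_eq_sub hp hq) n

theorem cellStart_cellLenS' (hp : 0 < p) (hq : 0 < q) (n : ℤ) :
    cellStart (cellLenS' p q) n = n + cellCountS' p q n :=
  cellStart_eq_add_of_telescope (by
    rw [cellCountS', if_neg (lt_irrefl 0), zero_mul, zero_sub,
      (Int.ediv_eq_iff_of_pos (y := -1) hp).2 ⟨by omega, by omega⟩, neg_add_cancel])
    (cellLenS'_eq_sub hp hq) n

theorem mem_range_cellStart_cellLenS (hp : 0 < p) (hq : 0 < q) (j : ℤ) :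
    j ∈ Set.range (cellStart (cellLenS p q)) ↔
      (0 < j ∧ ∃ n, n * (p + q) ∈ Set.Ioc (j * p) ((j + 1) * p)) ∨
      (j ≤ 0 ∧ ∃ n, n * (p + q) ∈ Set.Ico (j * p) ((j + 1) * p)) := by
  simp only [Set.mem_range, cellStart_cellLenS hp hq, cellCountS]
  constructor
  · rintro ⟨n, hn⟩
    split_ifs at hn with hn0
    · obtain ⟨h1, h2⟩ := (Int.ediv_eq_iff_of_pos hp).1 (eq_sub_of_add_eq' hn)
      exact Or.inl ⟨by nlinarith, n, by linarith, by linarith⟩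
    · obtain ⟨h1, h2⟩ := (Int.ediv_eq_iff_of_pos hp).1 (eq_sub_of_add_eq' hn)
      exact Or.inr ⟨by nlinarith, n, by linarith, by linarith⟩
  · rintro (⟨hj, n, h1, h2⟩ | ⟨hj, n, h1, h2⟩)
    · have hn0 : 0 < n := by nlinarith
      refine ⟨n, ?_⟩
      rw [if_pos hn0, (Int.ediv_eq_iff_of_pos (y := j - n) hp).2 ⟨by linarith, by linarith⟩]
      ring
    · have hn0 : ¬0 < n := by nlinarith
      refine ⟨n, ?_⟩
      rw [if_neg hn0, (Int.ediv_eq_iff_of_pos (y := j - n) hp).2 ⟨by linarith, by linarith⟩]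
      ring

theorem add_one_mem_range_cellStart_cellLenS' (hp : 0 < p) (hq : 0 < q) (j : ℤ) :
    j + 1 ∈ Set.range (cellStart (cellLenS' p q)) ↔
      (0 < j ∧ ∃ n, n * (p + q) ∈ Set.Ico (j * p) ((j + 1) * p)) ∨
      (j ≤ 0 ∧ ∃ n, n * (p + q) ∈ Set.Ioc (j * p) ((j + 1) * p)) := by
  simp only [Set.mem_range, cellStart_cellLenS' hp hq, cellCountS']
  constructor
  · rintro ⟨n, hn⟩
    split_ifs at hn with hn0
    · obtain ⟨h1, h2⟩ := (Int.ediv_eq_iff_of_pos (y := j - n) hp).1 (by linarith)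
      exact Or.inl ⟨by nlinarith, n, by linarith, by linarith⟩
    · obtain ⟨h1, h2⟩ := (Int.ediv_eq_iff_of_pos (y := j - n) hp).1 (by linarith)
      exact Or.inr ⟨by nlinarith, n, by linarith, by linarith⟩
  · rintro (⟨hj, n, h1, h2⟩ | ⟨hj, n, h1, h2⟩)
    · have hn0 : 0 < n := by nlinarith
      refine ⟨n, ?_⟩
      rw [if_pos hn0, (Int.ediv_eq_iff_of_pos (y := j - n) hp).2 ⟨by linarith, by linarith⟩]
      ring
    · have hn0 : ¬0 < n := by nlinarith
      refine ⟨n, ?_⟩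
      rw [if_neg hn0, (Int.ediv_eq_iff_of_pos (y := j - n) hp).2 ⟨by linarith, by linarith⟩]
      ring

theorem add_one_mem_range_cellStart_cellLenS'_iff (hp : 0 < p) (hq : 0 < q) (j : ℤ) :
    j + 1 ∈ Set.range (cellStart (cellLenS' q p)) ↔ j ∉ Set.range (cellStart (cellLenS p q)) := by
  rw [add_one_mem_range_cellStart_cellLenS' hq hp, mem_range_cellStart_cellLenS hp hq, add_comm q p]
  have hN : 0 < p + q := by omega
  rcases lt_or_ge 0 j with hj | hj
  · simp only [hj, not_le.2 hj, true_and, false_and, or_false]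
    rw [Int.exists_mul_mem_Ioc_iff_not_exists hN, not_not,
      Int.exists_mul_mem_Ioc_iff_exists_mul_mem_Ico (j + 1),
      show (j + 1) * (p + q) - (j * p + (p + q)) = j * q by ring,
      show (j + 1) * (p + q) - (j + 1) * p = (j + 1) * q by ring]
  · simp only [hj, not_lt.2 hj, true_and, false_and, false_or]
    rw [Int.exists_mul_mem_Ioc_iff_not_exists hN,
      Int.exists_mul_mem_Ioc_iff_exists_mul_mem_Ico (j + 1),
      show (j + 1) * (p + q) - (j * q + (p + q)) = j * p by ring,
      show (j + 1) * (p + q) - (j + 1) * q = (j + 1) * p by ring]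

theorem sturmS'_eq_swap_comp_shiftZ (hp : 0 < p) (hq : 0 < q) :
    sturmS' q p = Equiv.swap (0 : Fin 2) 1 ∘ shiftZ (-1) (sturmS p q) := by
  funext i
  have h := add_one_mem_range_cellStart_cellLenS'_iff hp hq (i - 1)
  simp only [sub_add_cancel, Set.mem_range] at h
  simp only [sturmS', sturmS, seqOfCells, Function.comp_apply, shiftZ, ← sub_eq_add_neg,
    eq_comm (a := i), eq_comm (a := i - 1), h]
  split_ifs <;> simp

end SkewSturmian

section Subshifts

variable {A B : Type*} [TopologicalSpace A] [TopologicalSpace B]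

theorem subshiftGen_shiftZ (k : ℤ) (x : ℤ → A) : subshiftGen (shiftZ k x) = subshiftGen x := by
  have shiftZ_shiftZ : ∀ m, shiftZ m (shiftZ k x) = shiftZ (m + k) x := fun m ↦ by
    funext i
    simp only [shiftZ, add_assoc]
  have horbit : seqOrbit (shiftZ k x) = seqOrbit x := by
    ext y
    constructor
    · rintro ⟨m, rfl⟩
      exact ⟨m + k, shiftZ_shiftZ m⟩
    · rintro ⟨m, rfl⟩
      exact ⟨m - k, by rw [shiftZ_shiftZ, sub_add_cancel]⟩
  rw [subshiftGen, horbit, subshiftGen]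

theorem conjugate_subshiftGen_comp (e : A ≃ₜ B) (x : ℤ → A) :
    Conjugate (subshiftGen x) (subshiftGen (e ∘ x)) := by
  let Φ : (ℤ → A) ≃ₜ (ℤ → B) := Homeomorph.piCongrRight fun _ ↦ e
  have horbit : seqOrbit (e ∘ x) = Φ '' seqOrbit x := by
    ext y
    constructor
    · rintro ⟨k, rfl⟩
      exact ⟨shiftZ k x, ⟨k, rfl⟩, rfl⟩
    · rintro ⟨_, ⟨k, rfl⟩, rfl⟩
      exact ⟨k, rfl⟩
  have hgen : Φ '' subshiftGen x = subshiftGen (e ∘ x) := by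
    rw [subshiftGen, Φ.image_closure, ← horbit, subshiftGen]
  exact ⟨(Φ.image _).trans (Homeomorph.setCongr hgen), fun _ _ _ ↦ rfl⟩

end Subshifts

theorem stmt_14_general (p q : ℤ) (hp : 0 < p) (hq : 0 < q) :
    Conjugate (subshiftGen (sturmS p q)) (subshiftGen (sturmS' q p)) := by
  rw [sturmS'_eq_swap_comp_shiftZ hp hq, ← subshiftGen_shiftZ (-1) (sturmS p q)]
  exact conjugate_subshiftGen_comp (Equiv.swap 0 1).toHomeomorphOfDiscrete _

/-- The subshift generated by the type-`S` sequence `S(0,q/p)` is conjugate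
to the subshift generated by the type-`S′` sequence `S′(0,p/q)`. -/
theorem stmt_14 (p q : ℤ) (hp : 0 < p) (hq : 0 < q) (hpq : IsCoprime p q) :
    Conjugate (subshiftGen (sturmS p q)) (subshiftGen (sturmS' q p)) :=
  stmt_14_general p q hp hq
end

section
/- Let p and q be relatively prime positive integers and let c be a nonzero integer such that q−c and p+c are also relatively prime positive integers. Let (a,b) be the restricted Bézout coefficients of (q,p) and let (e,f) be the restricted Bézout coefficients of (q−c, p+c). Then a+b ≠ e+f. Consequently, the anomaly sizes of the type-S skew Sturmian sequences S(0,q/p) and S(0,(q−c)/(p+c)) are different, and the anomaly sizes of the type-S′ skew Sturmian sequences S′(0,q/p) and S′(0,(q−c)/(p+c)) are different. -/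
open Classical

/-!
With `T = p + q`, the Bézout relation `b q - a p = 1` says that `(a + b) p ≡ -1 (mod T)`.
Summing the cell lengths, the cell starts of `S(0, q/p)` are `⌊n T / p⌋` for `n ≤ 0` and
`⌊(n T - 1) / p⌋` for `n ≥ 1`, and `{⌊(n T + r) / p⌋ : n ∈ ℤ}` is the set of `k` with
`(r - k p) mod T < p`: a rotation word, whose least period is `T` because `p` is a unit mod `T`.
Changing `r` from `0` to `-1` amounts to a shift by `a + b`, so `S(0, q/p)` is a `T`-periodic word
on the left and the same word delayed by `a + b` on the right, and its anomaly size is `a + b`;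
in the same way `S′(0, q/p)` has anomaly size `T - (a + b)`. Both pairs have the same `T`, and
`a + b = e + f` would give `T ∣ (a + b) c`, hence `T ∣ c`, which is impossible for `-p < c < q`.
-/

open Function

section Periodic

variable {α : Type*} {f g : ℤ → α} {L c : ℤ}

theorem Function.Periodic.eq_of_forall_le (hL : 0 < L) (hf : Periodic f L) (hg : Periodic g L)
    (h : ∀ k ≤ c, f k = g k) : f = g := by
  funext k
  have hk : k - |k - c| • L ≤ c := by
    rw [smul_eq_mul]
    nlinarith [le_abs_self (k - c), abs_nonneg (k - c)]
  rw [← (hf.zsmul |k - c|).sub_eq k, ← (hg.zsmul |k - c|).sub_eq k, h _ hk]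

theorem Function.Periodic.eq_of_forall_ge (hL : 0 < L) (hf : Periodic f L) (hg : Periodic g L)
    (h : ∀ k ≥ c, f k = g k) : f = g := by
  funext k
  have hk : c ≤ k + |k - c| • L := by
    rw [smul_eq_mul]
    nlinarith [neg_abs_le (k - c), abs_nonneg (k - c)]
  rw [← hf.zsmul |k - c| k, ← hg.zsmul |k - c| k, h _ hk]

end Periodic

theorem removeBlock_of_le {α : Type*} (x : ℤ → α) {i k : ℤ} (n : ℕ) (hk : k ≤ i) :
    removeBlock x i n k = x k := if_pos hk

theorem removeBlock_of_lt {α : Type*} (x : ℤ → α) {i k : ℤ} (n : ℕ) (hk : i < k) :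
    removeBlock x i n k = x (k + n) := if_neg hk.not_ge

theorem anomalySize_eq_of_eq_shift {α : Type*} {x P : ℤ → α} {T d i₀ : ℤ}
    (hd : 0 < d) (hdT : d < T) (hP : Periodic P T) (hPmin : ∀ t, Periodic P t → T ∣ t)
    (hleft : ∀ k ≤ i₀, x k = P k) (hright : ∀ k > i₀, x k = P (k - d)) :
    anomalySize x = d.toNat := by
  have hT : 0 < T := hd.trans hdT
  have hd' : ((d.toNat : ℕ) : ℤ) = d := Int.toNat_of_nonneg hd.le
  have hocc : ∃ i, IsAnomalyOcc x i d.toNat := by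
    have hy : removeBlock x i₀ d.toNat = P := by
      funext k
      rcases le_or_gt k i₀ with hk | hk
      · rw [removeBlock_of_le x _ hk, hleft k hk]
      · rw [removeBlock_of_lt x _ hk, hright _ (by omega), hd', add_sub_cancel_right]
    refine ⟨i₀, by omega, T.toNat, by omega, ?_⟩
    rw [hy, Int.toNat_of_nonneg hT.le]
    exact hP
  have hmin : ∀ n : ℕ, (∃ i, IsAnomalyOcc x i n) → d.toNat ≤ n := by
    rintro n ⟨i, -, N, hN, hy⟩
    have hy_eq : removeBlock x i n = P := by
      refine Periodic.eq_of_forall_le (L := N * T) (c := min i i₀) (by positivity)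
        (by simpa [mul_comm] using Periodic.int_mul hy T) (hP.int_mul N) fun k hk => ?_
      rw [removeBlock_of_le x n (hk.trans (min_le_left _ _)), hleft k (hk.trans (min_le_right _ _))]
    have hshift : Periodic P (n - d) := by
      refine congrFun <| Periodic.eq_of_forall_ge (c := max i i₀ + 1) hT
        (fun k => by simp only [add_right_comm k T, hP _]) hP fun k hk => ?_
      rw [← congrFun hy_eq k, removeBlock_of_lt x n (by omega), hright _ (by omega), add_sub_assoc]
    obtain ⟨j, hj⟩ := hPmin _ hshift
    have hj₀ : 0 ≤ j := by nlinarith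
    nlinarith
  exact le_antisymm (Nat.sInf_le hocc) (le_csInf ⟨_, hocc⟩ hmin)

theorem Int.emod_eq_of_modEq {a b n : ℤ} (h : a ≡ b [ZMOD n]) (hb : 0 ≤ b) (hbn : b < n) :
    a % n = b :=
  h.eq.trans (Int.emod_eq_of_lt hb hbn)

def rotationWord (p T r k : ℤ) : Fin 2 := if (r - k * p) % T < p then 1 else 0

section RotationWord

variable {p T r : ℤ}

theorem rotationWord_eq_one_iff {k : ℤ} : rotationWord p T r k = 1 ↔ (r - k * p) % T < p := by
  unfold rotationWord
  split_ifs with h <;> simp [h]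

theorem rotationWord_congr {r' k k' : ℤ} (h : r - k * p ≡ r' - k' * p [ZMOD T]) :
    rotationWord p T r k = rotationWord p T r' k' := by
  unfold rotationWord
  rw [h]

theorem rotationWord_periodic : Periodic (rotationWord p T r) T :=
  fun _ => rotationWord_congr (Int.modEq_iff_dvd.2 ⟨p, by ring⟩)

theorem dvd_of_periodic_rotationWord (hp : 0 < p) (hpT : p < T) (hcop : IsCoprime p T) {t : ℤ}
    (ht : Periodic (rotationWord p T r) t) : T ∣ t := by
  obtain ⟨u, v, huv⟩ := hcop
  have hT : 0 < T := hp.trans hpT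
  -- `u` inverts `p` modulo `T`, so moving the position by `u * (r - s)` turns offset `r` into `s`.
  have key : ∀ s, (s - t * p) % T < p ↔ s % T < p := fun s => by
    have h₁ : rotationWord p T r (u * (r - s) + t) = rotationWord p T s t :=
      rotationWord_congr (Int.modEq_iff_dvd.2 ⟨-((r - s) * v), by linear_combination (r - s) * huv⟩)
    have h₀ : rotationWord p T r (u * (r - s)) = rotationWord p T s 0 :=
      rotationWord_congr (Int.modEq_iff_dvd.2 ⟨-((r - s) * v), by linear_combination (r - s) * huv⟩)
    rw [← rotationWord_eq_one_iff, ← h₁, ht, h₀, rotationWord_eq_one_iff, zero_mul, sub_zero]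
  set m := (0 - t * p) % T with hm_def
  have hm : m < p := (key 0).2 (by simpa using hp)
  have hm₁ : ¬ (-1 - t * p) % T < p := mt (key (-1)).1 (by
    rw [Int.emod_eq_of_modEq (b := T - 1) (Int.modEq_iff_dvd.2 ⟨1, by ring⟩) (by omega) (by omega)]
    omega)
  have hm₀ : m = 0 := by
    by_contra hne
    have := Int.emod_nonneg (0 - t * p) hT.ne'
    have hcong : -1 - t * p ≡ m - 1 [ZMOD T] :=
      Int.modEq_iff_dvd.2 ⟨-((0 - t * p) / T), by rw [hm_def, Int.emod_def]; ring⟩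
    exact hm₁ (by rw [Int.emod_eq_of_modEq hcong (by omega) (by omega)]; omega)
  have hdvd : T ∣ t * p := by
    simpa using Int.dvd_of_emod_eq_zero hm₀
  exact (IsCoprime.symm ⟨u, v, huv⟩).dvd_of_dvd_mul_right hdvd

theorem exists_eq_ediv_iff (hp : 0 < p) (hpT : p ≤ T) {k : ℤ} :
    (∃ n, k = (n * T + r) / p) ↔ (r - k * p) % T < p := by
  have hT : 0 < T := hp.trans_le hpT
  constructor
  · rintro ⟨n, rfl⟩
    have h₁ := Int.ediv_mul_le (n * T + r) hp.ne'
    have h₂ := Int.lt_ediv_add_one_mul_self (n * T + r) hp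
    rw [Int.emod_eq_of_modEq (b := n * T + r - (n * T + r) / p * p)
      (Int.modEq_iff_dvd.2 ⟨n, by ring⟩) (by linarith) (by linarith)]
    linarith
  · intro h
    refine ⟨-((r - k * p) / T), ?_⟩
    have := Int.mul_ediv_add_emod (r - k * p) T
    have := Int.emod_nonneg (r - k * p) hT.ne'
    rw [eq_comm, Int.ediv_eq_iff_of_pos hp]
    constructor <;> linarith

end RotationWord

theorem Int.sum_Ico_sub {M : Type*} [AddCommGroup M] (F : ℤ → M) {m n : ℤ} (h : m ≤ n) :
    ∑ j ∈ Finset.Ico m n, (F (j + 1) - F j) = F n - F m := by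
  induction n, h using Int.leInduction with
  | base => simp
  | succ n hmn ih =>
    rw [← Finset.insert_Ico_right_eq_Ico_add_one hmn, Finset.sum_insert Finset.right_notMem_Ico, ih]
    abel

theorem cellStart_eq_of_telescoping {z : ℤ → ℕ} (F : ℤ → ℤ) (hF : F 0 = 0)
    (hz : ∀ n, (z n : ℤ) = F (n + 1) - F n) (n : ℤ) : cellStart z n = n + F n := by
  unfold cellStart
  simp only [hz]
  split_ifs with hn
  · rw [Int.sum_Ico_sub F hn, hF, sub_zero]
  · rw [Int.sum_Ico_sub F (by omega), hF]
    ring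

theorem Int.ncard_setOf_lt_mul_le {p : ℤ} (hp : 0 < p) {lo hi : ℤ} (h : lo ≤ hi) :
    ({k : ℤ | lo < k * p ∧ k * p ≤ hi}.ncard : ℤ) = hi / p - lo / p := by
  have hset : {k : ℤ | lo < k * p ∧ k * p ≤ hi} = Set.Ioc (lo / p) (hi / p) := by
    ext k
    simp only [Set.mem_ofPred_eq, Set.mem_Ioc, Int.ediv_lt_iff_lt_mul hp, Int.le_ediv_iff_mul_le hp]
  rw [hset, ← Finset.coe_Ioc, Set.ncard_coe_finset, Int.card_Ioc_of_le _ _ (Int.ediv_le_ediv hp h)]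

section RatCast

variable {p q : ℤ} (hq : 0 < q) {n k : ℤ}
include hq

theorem intCast_lt_mul_div_iff : (n : ℚ) < k * (p / q) ↔ n * q < k * p := by
  rw [← mul_div_assoc, lt_div_iff₀ (by exact_mod_cast hq)]
  norm_cast

theorem intCast_le_mul_div_iff : (n : ℚ) ≤ k * (p / q) ↔ n * q - 1 < k * p := by
  rw [Int.sub_one_lt_iff, ← mul_div_assoc, le_div_iff₀ (by exact_mod_cast hq)]
  norm_cast

theorem mul_div_le_intCast_iff : k * (p / q : ℚ) ≤ n ↔ k * p ≤ n * q := by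
  rw [← mul_div_assoc, div_le_iff₀ (by exact_mod_cast hq)]
  norm_cast

theorem mul_div_lt_intCast_iff : k * (p / q : ℚ) < n ↔ k * p ≤ n * q - 1 := by
  rw [Int.le_sub_one_iff, ← mul_div_assoc, div_lt_iff₀ (by exact_mod_cast hq)]
  norm_cast

end RatCast

section CellStart

variable {p q : ℤ} (hp : 0 < p) (hq : 0 < q)
include hp hq

theorem cellStart_cellLenS_s15 (n : ℤ) :
    cellStart (cellLenS p q) n = if n ≤ 0 then n * (p + q) / p else (n * (p + q) - 1) / p := by
  rw [cellStart_eq_of_telescoping (fun n => if n ≤ 0 then n * q / p else (n * q - 1) / p)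
    (by simp) fun n => ?_]
  · split_ifs
    · rw [show n * (p + q) = n * q + n * p by ring, Int.add_mul_ediv_right _ _ hp.ne']
      ring
    · rw [show n * (p + q) - 1 = n * q - 1 + n * p by ring, Int.add_mul_ediv_right _ _ hp.ne']
      ring
  · unfold cellLenS
    simp only [← Int.cast_zero (R := ℚ), ← Int.cast_one (R := ℚ), ← Int.cast_add,
      intCast_lt_mul_div_iff hq, intCast_le_mul_div_iff hq, mul_div_le_intCast_iff hq,
      mul_div_lt_intCast_iff hq]
    rcases lt_trichotomy n 0 with hn | rfl | hn
    · rw [if_pos hn, if_pos (by omega : n + 1 ≤ 0), if_pos hn.le,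
        Int.ncard_setOf_lt_mul_le hp (by nlinarith)]
    · rw [if_neg (lt_irrefl 0), if_pos rfl, if_neg (by norm_num), if_pos le_rfl,
        Int.ncard_setOf_lt_mul_le hp (by omega)]
      simp
    · rw [if_neg (by omega), if_neg (by omega), if_neg (by omega), if_neg (by omega),
        Int.ncard_setOf_lt_mul_le hp (by nlinarith)]

theorem cellStart_cellLenS'_s15 (n : ℤ) :
    cellStart (cellLenS' p q) n =
      if n ≤ 0 then (n * (p + q) + (p - 1)) / p else (n * (p + q) + p) / p := by
  rw [cellStart_eq_of_telescoping (fun n => if n ≤ 0 then (n * q - 1) / p + 1 else n * q / p + 1)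
    (by simp [Int.neg_one_ediv, Int.sign_eq_one_of_pos hp]) fun n => ?_]
  · split_ifs
    · rw [show n * (p + q) + (p - 1) = n * q - 1 + (n + 1) * p by ring,
        Int.add_mul_ediv_right _ _ hp.ne']
      ring
    · rw [show n * (p + q) + p = n * q + (n + 1) * p by ring, Int.add_mul_ediv_right _ _ hp.ne']
      ring
  · unfold cellLenS'
    simp only [← Int.cast_zero (R := ℚ), ← Int.cast_one (R := ℚ), ← Int.cast_add,
      intCast_lt_mul_div_iff hq, intCast_le_mul_div_iff hq, mul_div_le_intCast_iff hq,
      mul_div_lt_intCast_iff hq]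
    rcases lt_trichotomy n 0 with hn | rfl | hn
    · rw [if_pos hn, if_pos (by omega : n + 1 ≤ 0), if_pos hn.le,
        Int.ncard_setOf_lt_mul_le hp (by nlinarith)]
      ring
    · rw [if_neg (lt_irrefl 0), if_pos rfl, if_neg (by norm_num), if_pos le_rfl,
        Int.ncard_setOf_lt_mul_le hp (by omega)]
      simp
    · rw [if_neg (by omega), if_neg (by omega), if_neg (by omega), if_neg (by omega),
        Int.ncard_setOf_lt_mul_le hp (by nlinarith)]
      ring

end CellStart

theorem Int.mul_add_ediv_le_iff_nonpos {p T r m : ℤ} (hp : 0 < p) (hr : r < (m + 1) * p)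
    (hr' : (m + 1) * p ≤ T + r) {n : ℤ} : (n * T + r) / p ≤ m ↔ n ≤ 0 := by
  rw [← Int.lt_add_one_iff, Int.ediv_lt_iff_lt_mul hp]
  have hT : 0 ≤ T := by nlinarith
  constructor
  · intro h
    by_contra hn
    nlinarith
  · intro hn
    nlinarith

section Splice

variable {z : ℤ → ℕ} {p T r₁ r₂ m : ℤ} (hp : 0 < p) (hpT : p ≤ T)
  (hz : ∀ n, cellStart z n = if n ≤ 0 then (n * T + r₁) / p else (n * T + r₂) / p)
  (hr₁ : r₁ < (m + 1) * p ∧ (m + 1) * p ≤ T + r₁) (hr₂ : r₂ < (m + 1) * p ∧ (m + 1) * p ≤ T + r₂)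
include hp hpT hz hr₁ hr₂

theorem seqOfCells_eq_of_le {k : ℤ} (hk : k ≤ m) : seqOfCells z k = rotationWord p T r₁ k := by
  have hmem : (∃ n, k = cellStart z n) ↔ ∃ n, k = (n * T + r₁) / p := by
    simp only [hz]
    constructor
    · rintro ⟨n, hn⟩
      split_ifs at hn with h
      · exact ⟨n, hn⟩
      · exact absurd (hn ▸ hk) ((Int.mul_add_ediv_le_iff_nonpos hp hr₂.1 hr₂.2).not.2 h)
    · rintro ⟨n, rfl⟩
      exact ⟨n, by rw [if_pos ((Int.mul_add_ediv_le_iff_nonpos hp hr₁.1 hr₁.2).1 hk)]⟩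
  simp only [seqOfCells, rotationWord, hmem, exists_eq_ediv_iff hp hpT]

theorem seqOfCells_eq_of_lt {k : ℤ} (hk : m < k) : seqOfCells z k = rotationWord p T r₂ k := by
  have hmem : (∃ n, k = cellStart z n) ↔ ∃ n, k = (n * T + r₂) / p := by
    simp only [hz]
    constructor
    · rintro ⟨n, hn⟩
      split_ifs at hn with h
      · exact absurd (hn ▸ hk) ((Int.mul_add_ediv_le_iff_nonpos hp hr₁.1 hr₁.2).2 h).not_gt
      · exact ⟨n, hn⟩
    · rintro ⟨n, rfl⟩
      exact ⟨n, by rw [if_neg ((Int.mul_add_ediv_le_iff_nonpos hp hr₂.1 hr₂.2).not.1 hk.not_ge)]⟩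
  simp only [seqOfCells, rotationWord, hmem, exists_eq_ediv_iff hp hpT]

end Splice

theorem add_ne_add_of_bezout {p q c a b e f : ℤ} (hp : 0 < p) (hq : 0 < q) (hc : c ≠ 0)
    (hqc : 0 < q - c) (hpc : 0 < p + c) (hab : b * q - a * p = 1)
    (hef : f * (q - c) - e * (p + c) = 1) : a + b ≠ e + f := by
  intro hs
  have hcop : IsCoprime (p + q) (a + b) := ⟨b, -p, by linear_combination hab⟩
  have hdvd : p + q ∣ (a + b) * c := ⟨f - b, by linear_combination (c + p) * hs - hef + hab⟩
  exact hc (Int.eq_zero_of_abs_lt_dvd (hcop.dvd_of_dvd_mul_left hdvd)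
    (abs_lt.2 ⟨by linarith, by linarith⟩))

section Bezout

variable {p q a b : ℤ} (hp : 0 < p) (hq : 0 < q) (ha : 0 ≤ a) (ha' : a < q) (hb : 0 < b)
  (hb' : b ≤ p) (hab : b * q - a * p = 1)
include hp hq ha ha' hb hb' hab

theorem anomalySize_sturmS : anomalySize (sturmS p q) = (a + b).toNat := by
  have hz : ∀ n, cellStart (cellLenS p q) n =
      if n ≤ 0 then (n * (p + q) + 0) / p else (n * (p + q) + -1) / p := by
    simpa only [add_zero, ← sub_eq_add_neg] using cellStart_cellLenS_s15 hp hq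
  have hr₁ : (0 : ℤ) < (0 + 1) * p ∧ (0 + 1) * p ≤ p + q + 0 := by omega
  have hr₂ : (-1 : ℤ) < (0 + 1) * p ∧ (0 + 1) * p ≤ p + q + -1 := by omega
  refine anomalySize_eq_of_eq_shift (by omega) (by omega) rotationWord_periodic
    (fun _ => dvd_of_periodic_rotationWord hp (by omega) ⟨-(a + b), b, by linear_combination hab⟩)
    (fun k hk => seqOfCells_eq_of_le hp (by omega) hz hr₁ hr₂ hk) fun k hk => ?_
  rw [sturmS, seqOfCells_eq_of_lt hp (by omega) hz hr₁ hr₂ hk]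
  exact rotationWord_congr (Int.modEq_iff_dvd.2 ⟨b, by linear_combination -hab⟩)

theorem anomalySize_sturmS' : anomalySize (sturmS' p q) = (p + q - (a + b)).toNat := by
  have hr₁ : p - 1 < (1 + 1) * p ∧ (1 + 1) * p ≤ p + q + (p - 1) := by omega
  have hr₂ : p < (1 + 1) * p ∧ (1 + 1) * p ≤ p + q + p := by omega
  have hz := cellStart_cellLenS'_s15 hp hq
  refine anomalySize_eq_of_eq_shift (by omega) (by omega) rotationWord_periodic
    (fun _ => dvd_of_periodic_rotationWord hp (by omega) ⟨-(a + b), b, by linear_combination hab⟩)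
    (fun k hk => seqOfCells_eq_of_le hp (by omega) hz hr₁ hr₂ hk) fun k hk => ?_
  rw [sturmS', seqOfCells_eq_of_lt hp (by omega) hz hr₁ hr₂ hk]
  exact rotationWord_congr (Int.modEq_iff_dvd.2 ⟨p - b, by linear_combination hab⟩)

end Bezout

theorem stmt_15_general (p q c : ℤ) (hp : 0 < p) (hq : 0 < q)
    (hc : c ≠ 0) (hqc : 0 < q - c) (hpc : 0 < p + c)
    (a b : ℤ) (ha : 0 ≤ a) (ha' : a < q) (hb : 0 < b) (hb' : b ≤ p)
    (hab : b * q - a * p = 1)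
    (e f : ℤ) (he : 0 ≤ e) (he' : e < q - c) (hf : 0 < f) (hf' : f ≤ p + c)
    (hef : f * (q - c) - e * (p + c) = 1) :
    a + b ≠ e + f ∧
      anomalySize (sturmS p q) ≠ anomalySize (sturmS (p + c) (q - c)) ∧
      anomalySize (sturmS' p q) ≠ anomalySize (sturmS' (p + c) (q - c)) := by
  have hne := add_ne_add_of_bezout hp hq hc hqc hpc hab hef
  refine ⟨hne, ?_, ?_⟩
  · rw [anomalySize_sturmS hp hq ha ha' hb hb' hab, anomalySize_sturmS hpc hqc he he' hf hf' hef]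
    omega
  · rw [anomalySize_sturmS' hp hq ha ha' hb hb' hab,
      anomalySize_sturmS' hpc hqc he he' hf hf' hef]
    omega

/-- If `(a,b)` and `(e,f)` are the restricted Bézout coefficients of
`(q,p)` and `(q-c, p+c)` respectively (`c ≠ 0`), then `a+b ≠ e+f`; consequently the
anomaly sizes of the corresponding same-type skew Sturmian sequences differ. -/
theorem stmt_15 (p q c : ℤ) (hp : 0 < p) (hq : 0 < q) (hpq : IsCoprime p q)
    (hc : c ≠ 0) (hqc : 0 < q - c) (hpc : 0 < p + c) (hpq2 : IsCoprime (q - c) (p + c))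
    (a b : ℤ) (ha : 0 ≤ a) (ha' : a < q) (hb : 0 < b) (hb' : b ≤ p)
    (hab : b * q - a * p = 1)
    (e f : ℤ) (he : 0 ≤ e) (he' : e < q - c) (hf : 0 < f) (hf' : f ≤ p + c)
    (hef : f * (q - c) - e * (p + c) = 1) :
    a + b ≠ e + f ∧
      anomalySize (sturmS p q) ≠ anomalySize (sturmS (p + c) (q - c)) ∧
      anomalySize (sturmS' p q) ≠ anomalySize (sturmS' (p + c) (q - c)) :=
  stmt_15_general p q c hp hq hc hqc hpc a b ha ha' hb hb' hab e f he he' hf hf' hef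
end
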